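/- For every graph G and every set F of graphs, the number of non-adjacent vertex pairs of G lying in two distinct components with at least one of those components in F is at least (1/2)·v(G)·frag(G,F), where frag(G,F) is the number of vertices in the components of the fragment of G (the graph minus its largest component) that belong to F. -/

import Mathlib

/-- Membership of a graph `H` in an isomorphism-closed class `F` of graphs, given as a family
`F m ⊆ SimpleGraph (Fin m)`. -/
def memClass (F : ∀ m : ℕ, Set (SimpleGraph (Fin m))) {V : Type*} (H : SimpleGraph V) : Prop :=
  ∃ H' ∈ F (Nat.card V), Nonempty (H ≃g H')

/-- The component of `v` in `G`, as an abstract graph (induced on its support). -/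
abbrev compGraph {n : ℕ} (G : SimpleGraph (Fin n)) (v : Fin n) :=
  G.induce (G.connectedComponentMk v).supp

/-- `frag(G, F)` relative to the choice `c0` of a (largest) component: the number of vertices
in components of `G` other than `c0` that belong to `F`. -/
noncomputable def fragF {n : ℕ} (G : SimpleGraph (Fin n)) (F : ∀ m : ℕ, Set (SimpleGraph (Fin m)))
    (c0 : G.ConnectedComponent) : ℕ :=
  Nat.card {v : Fin n // G.connectedComponentMk v ≠ c0 ∧ memClass F (compGraph G v)}

/-- `frag(G)` relative to the choice `c0` of a (largest) component. -/
noncomputable def fragAll {n : ℕ} (G : SimpleGraph (Fin n)) (c0 : G.ConnectedComponent) : ℕ :=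
  Nat.card {v : Fin n // G.connectedComponentMk v ≠ c0}

/-- `|Cross(G, F)|`: the number of non-adjacent (unordered, here: increasing) vertex pairs of
`G` lying in two distinct components, at least one of which is in `F`. -/
noncomputable def crossF {n : ℕ} (G : SimpleGraph (Fin n))
    (F : ∀ m : ℕ, Set (SimpleGraph (Fin m))) : ℕ :=
  Nat.card {p : Fin n × Fin n // p.1 < p.2 ∧ ¬ G.Adj p.1 p.2 ∧
    G.connectedComponentMk p.1 ≠ G.connectedComponentMk p.2 ∧
    (memClass F (compGraph G p.1) ∨ memClass F (compGraph G p.2))}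

/-- `|Cross(G)|`: all non-adjacent pairs in distinct components. -/
noncomputable def crossAll {n : ℕ} (G : SimpleGraph (Fin n)) : ℕ :=
  Nat.card {p : Fin n × Fin n // p.1 < p.2 ∧ ¬ G.Adj p.1 p.2 ∧
    G.connectedComponentMk p.1 ≠ G.connectedComponentMk p.2}

/-- The fragment predicate: `v` lies in a component other than `c0` belonging to `F`. -/
def Sprop {n : ℕ} (G : SimpleGraph (Fin n)) (F : ∀ m : ℕ, Set (SimpleGraph (Fin m)))
    (c0 : G.ConnectedComponent) (v : Fin n) : Prop :=
  G.connectedComponentMk v ≠ c0 ∧ memClass F (compGraph G v)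

lemma Sprop_congr {n : ℕ} {G : SimpleGraph (Fin n)} {F : ∀ m : ℕ, Set (SimpleGraph (Fin m))}
    {c0 : G.ConnectedComponent} {u v : Fin n}
    (h : G.connectedComponentMk u = G.connectedComponentMk v) :
    Sprop G F c0 u ↔ Sprop G F c0 v := by
  unfold Sprop compGraph
  rw [h]

/-- The auxiliary graph: `G` plus all edges between non-fragment vertices. -/
def Gaux {n : ℕ} (G : SimpleGraph (Fin n)) (F : ∀ m : ℕ, Set (SimpleGraph (Fin m)))
    (c0 : G.ConnectedComponent) : SimpleGraph (Fin n) where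
  Adj u v := G.Adj u v ∨ (u ≠ v ∧ ¬ Sprop G F c0 u ∧ ¬ Sprop G F c0 v)
  symm := by
    constructor
    rintro u v (h | ⟨h1, h2, h3⟩)
    · exact Or.inl h.symm
    · exact Or.inr ⟨h1.symm, h3, h2⟩
  loopless := by
    constructor
    rintro v (h | ⟨h1, _⟩)
    · exact G.irrefl h
    · exact h1 rfl

lemma Gaux_le {n : ℕ} (G : SimpleGraph (Fin n)) (F : ∀ m : ℕ, Set (SimpleGraph (Fin m)))
    (c0 : G.ConnectedComponent) : G ≤ Gaux G F c0 :=
  fun _ _ h => Or.inl h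

/-- A walk in `Gaux` starting inside the fragment stays a `G`-reachability. -/
lemma Gaux_walk_reach {n : ℕ} {G : SimpleGraph (Fin n)} {F : ∀ m : ℕ, Set (SimpleGraph (Fin m))}
    {c0 : G.ConnectedComponent} :
    ∀ {v u : Fin n}, (Gaux G F c0).Walk v u → Sprop G F c0 v → G.Reachable v u := by
  intro v u w
  induction w with
  | nil => exact fun _ => SimpleGraph.Reachable.refl _
  | @cons a b c h p ih =>
    intro hS
    rcases h with h | ⟨_, hna, _⟩
    · exact (SimpleGraph.Adj.reachable h).trans
        (ih ((Sprop_congr (SimpleGraph.ConnectedComponent.sound h.reachable)).mp hS))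
    · exact absurd hS hna

/-- assuming the known inequality `|Cross(G')| ≥ ½ v(G') · frag(G')` for all
graphs `G'`, we have `|Cross(G, F)| ≥ ½ v(G) · frag(G, F)` for every graph `G` and class `F`
(for any choice of a largest component defining the fragment). -/
theorem stmt3
    (hknown : ∀ (m : ℕ) (G' : SimpleGraph (Fin m)) (c0' : G'.ConnectedComponent),
      (∀ c : G'.ConnectedComponent, Nat.card c.supp ≤ Nat.card c0'.supp) →
      m * fragAll G' c0' ≤ 2 * crossAll G')
    (n : ℕ) (G : SimpleGraph (Fin n)) (F : ∀ m : ℕ, Set (SimpleGraph (Fin m)))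
    (c0 : G.ConnectedComponent)
    (hc0 : ∀ c : G.ConnectedComponent, Nat.card c.supp ≤ Nat.card c0.supp) :
    n * fragF G F c0 ≤ 2 * crossF G F := by
  classical
  obtain ⟨v0, hv0⟩ := c0.exists_rep
  set G' := Gaux G F c0 with hG'
  have hle : G ≤ G' := Gaux_le G F c0
  have hv0S : ¬ Sprop G F c0 v0 := fun h => h.1 hv0
  -- every non-fragment vertex is G'-reachable to v0
  have hns : ∀ u, ¬ Sprop G F c0 u → G'.Reachable u v0 := by
    intro u hu
    by_cases h : u = v0
    · subst h; exact SimpleGraph.Reachable.refl _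
    · exact SimpleGraph.Adj.reachable (Or.inr ⟨h, hu, hv0S⟩)
  set c0' := G'.connectedComponentMk v0 with hc0'
  -- characterize non-c0' vertices of G' as exactly the fragment vertices
  have hchar : ∀ v, G'.connectedComponentMk v ≠ c0' ↔ Sprop G F c0 v := by
    intro v
    constructor
    · intro h
      by_contra hS
      exact h (SimpleGraph.ConnectedComponent.sound (hns v hS))
    · intro hS h
      have hr : G'.Reachable v v0 := SimpleGraph.ConnectedComponent.eq.mp h
      have : G.Reachable v v0 := Gaux_walk_reach hr.some hS
      exact hS.1 ((SimpleGraph.ConnectedComponent.sound this).trans hv0)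
  -- components of fragment vertices have the same support in G and G'
  have hsupp : ∀ v, Sprop G F c0 v →
      (G'.connectedComponentMk v).supp = (G.connectedComponentMk v).supp := by
    intro v hS
    ext u
    simp only [SimpleGraph.ConnectedComponent.mem_supp_iff]
    constructor
    · intro h
      have hr : G'.Reachable u v := SimpleGraph.ConnectedComponent.eq.mp h
      have hSv : Sprop G F c0 u := (Sprop_congr (SimpleGraph.ConnectedComponent.sound
        (Gaux_walk_reach hr.symm.some hS))).mp hS
      exact SimpleGraph.ConnectedComponent.sound (Gaux_walk_reach hr.some hSv)
    · intro h
      exact SimpleGraph.ConnectedComponent.sound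
        ((SimpleGraph.ConnectedComponent.eq.mp h).mono hle)
  -- c0' is a largest component of G'
  have hmax : ∀ c : G'.ConnectedComponent, Nat.card c.supp ≤ Nat.card c0'.supp := by
    intro c
    obtain ⟨u, rfl⟩ := c.exists_rep
    have hrep : (Quot.mk G'.Reachable u : G'.ConnectedComponent) = G'.connectedComponentMk u := rfl
    rw [hrep]
    by_cases hS : Sprop G F c0 u
    · rw [hsupp u hS]
      refine (hc0 _).trans ?_
      refine Nat.card_mono (Set.toFinite _) ?_
      intro w hw
      rw [SimpleGraph.ConnectedComponent.mem_supp_iff] at hw ⊢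
      have : G.Reachable w v0 := SimpleGraph.ConnectedComponent.eq.mp (hw.trans hv0.symm)
      exact SimpleGraph.ConnectedComponent.sound (this.mono hle)
    · have : G'.connectedComponentMk u = c0' := by
        by_contra h
        exact hS ((hchar u).mp h)
      rw [this]
  -- fragAll G' c0' = fragF G F c0
  have hfrag : fragAll G' c0' = fragF G F c0 := by
    unfold fragAll fragF
    exact Nat.card_congr (Equiv.subtypeEquivRight fun v => hchar v)
  -- crossAll G' ≤ crossF G F
  have hcross : crossAll G' ≤ crossF G F := by
    unfold crossAll crossF
    have key : ∀ p : Fin n × Fin n, p.1 < p.2 → ¬ G'.Adj p.1 p.2 →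
        G'.connectedComponentMk p.1 ≠ G'.connectedComponentMk p.2 →
        (p.1 < p.2 ∧ ¬ G.Adj p.1 p.2 ∧
          G.connectedComponentMk p.1 ≠ G.connectedComponentMk p.2 ∧
          (memClass F (compGraph G p.1) ∨ memClass F (compGraph G p.2))) := by
      intro p hlt hadj hcc
      have hne : p.1 ≠ p.2 := Fin.ne_of_lt hlt
      have hone : Sprop G F c0 p.1 ∨ Sprop G F c0 p.2 := by
        by_contra h
        push_neg at h
        exact hadj (Or.inr ⟨hne, h.1, h.2⟩)
      refine ⟨hlt, fun h => hadj (hle h), fun h => hcc ?_, ?_⟩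
      · exact SimpleGraph.ConnectedComponent.sound
          ((SimpleGraph.ConnectedComponent.eq.mp h).mono hle)
      · exact hone.imp (fun h => h.2) (fun h => h.2)
    exact Nat.card_le_card_of_injective
      (fun q => ⟨q.1, key q.1 q.2.1 q.2.2.1 q.2.2.2⟩)
      (by
        intro a b h
        have h2 := congrArg Subtype.val h
        exact Subtype.ext h2)
  calc n * fragF G F c0 = n * fragAll G' c0' := by rw [hfrag]
    _ ≤ 2 * crossAll G' := hknown n G' c0' hmax
    _ ≤ 2 * crossF G F := by omega
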